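/- (Sobolev's inequality) Let Φ : ℝ^d → [0,∞) be an N_∞ function, A_Φ its greatest convex radial minorant, identified with the invertible increasing function Ā : [0,∞) → [0,∞) via A_Φ(x) = Ā(|x|). For every u ∈ W^1L^Φ([0,T],ℝ^d) one has sup_{t∈[0,T]} |u(t)| ≤ Ā^{−1}(1/T) · max{1, T} · ( ‖u‖_{L^Φ} + ‖u'‖_{L^Φ} ). -/

import Mathlib

/-!
Put `b = Ā⁻¹(1/T)`. If `ρ_Φ(v / l) ≤ 1`, then, `A_Φ ≤ Φ` being convex and radial, Jensen's
inequality for the convex profile `Ā` gives `Ā(⨍ |v| / l) ≤ ⨍ A_Φ(v / l) ≤ 1/T = Ā(b)`, and since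
`Ā` is convex with `Ā(0) = 0` this forces `∫₀ᵀ |v| ≤ l T b`. Apply this to `u` and `u'` with
admissible constants `l`, `l'` of their Luxemburg norms, and average
`|u(t)| ≤ |u(s)| + ∫₀ᵀ |u'|` over `s ∈ [0,T]`: `|u(t)| ≤ b (l + T l') ≤ b max{1,T} (l + l')`.
Taking the infimum over `l` and `l'` gives the bound.
-/

open MeasureTheory Filter Set
open scoped ENNReal RealInnerProductSpace Topology

noncomputable section

/-- `ℝ^d` with the euclidean norm. -/
abbrev Ed (d : ℕ) : Type := EuclideanSpace ℝ (Fin d)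

/-- `Φ` is an `N_∞` function: differentiable, convex, nonnegative, vanishing exactly at `0`,
even, and superlinear at infinity. -/
def IsNInf {m : ℕ} (Φ : Ed m → ℝ) : Prop :=
  Differentiable ℝ Φ ∧ ConvexOn ℝ Set.univ Φ ∧ (∀ y, 0 ≤ Φ y) ∧ Φ 0 = 0 ∧
    (∀ y, y ≠ 0 → 0 < Φ y) ∧ (∀ y, Φ (-y) = Φ y) ∧
    Tendsto (fun y => Φ y / ‖y‖) (comap (fun y : Ed m => ‖y‖) atTop) atTop

variable {d : ℕ}

/-- The modular `ρ_Φ(u) = ∫_0^T Φ(u(t)) dt`, as an extended nonnegative real. -/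
def rhoE (T : ℝ) (Φ : Ed d → ℝ) (u : ℝ → Ed d) : ℝ≥0∞ :=
  ∫⁻ t in Icc (0:ℝ) T, ENNReal.ofReal (Φ (u t))

/-- `u ∈ L^Φ([0,T], ℝ^d)`. -/
def MemLphi (T : ℝ) (Φ : Ed d → ℝ) (u : ℝ → Ed d) : Prop :=
  AEMeasurable u (volume.restrict (Icc (0:ℝ) T)) ∧
    ∃ l : ℝ, 0 < l ∧ rhoE T Φ (fun t => l • u t) < ⊤

/-- The Luxemburg norm of `u` on `[0,T]`. -/
def luxNorm (T : ℝ) (Φ : Ed d → ℝ) (u : ℝ → Ed d) : ℝ :=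
  sInf {l : ℝ | 0 < l ∧ rhoE T Φ (fun t => l⁻¹ • u t) ≤ 1}

/-- `u ∈ W^1L^Φ([0,T], ℝ^d)` with a.e. derivative `u'` : `u` is absolutely continuous,
being the integral of the (integrable) function `u'`, and `u' ∈ L^Φ`. -/
def MemW1Lphi (T : ℝ) (Φ : Ed d → ℝ) (u u' : ℝ → Ed d) : Prop :=
  IntegrableOn u' (Icc (0:ℝ) T) ∧ MemLphi T Φ u' ∧
    ∀ t ∈ Icc (0:ℝ) T, u t = u 0 + ∫ s in (0:ℝ)..t, u' s

/-- `Ψ` is a convex, nonnegative, radial minorant of `Φ`. -/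
def RadialConvexMinorant (Φ Ψ : Ed d → ℝ) : Prop :=
  ConvexOn ℝ Set.univ Ψ ∧ (∀ x, 0 ≤ Ψ x) ∧ (∀ x y, ‖x‖ = ‖y‖ → Ψ x = Ψ y) ∧ ∀ x, Ψ x ≤ Φ x

/-- `A_Φ`, the greatest convex radial minorant of `Φ`. -/
def APhi (Φ : Ed d → ℝ) (x : Ed d) : ℝ :=
  sSup {r : ℝ | ∃ Ψ, RadialConvexMinorant Φ Ψ ∧ r = Ψ x}

lemma ConvexOn.apply_smul_le {E : Type*} [AddCommGroup E] [Module ℝ E] {s : Set E} {f : E → ℝ}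
    (hf : ConvexOn ℝ s f) (h0 : f 0 = 0) (h0s : (0 : E) ∈ s) {x : E} (hx : x ∈ s) {c : ℝ}
    (hc0 : 0 ≤ c) (hc1 : c ≤ 1) : f (c • x) ≤ c * f x := by
  simpa [h0] using hf.2 hx h0s hc0 (sub_nonneg.2 hc1) (add_sub_cancel c 1)

lemma ConvexOn.le_of_apply_le {g : ℝ → ℝ} (hg : ConvexOn ℝ (Ici 0) g) (hg0 : g 0 = 0)
    {a b : ℝ} (ha : 0 ≤ a) (hb : 0 ≤ b) (hgb : 0 < g b) (h : g a ≤ g b) : a ≤ b := by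
  by_contra! hba
  have hratio : b / a < 1 := (div_lt_one (hb.trans_lt hba)).2 hba
  have hscale : g b ≤ b / a * g a := by
    simpa [div_mul_cancel₀ b (hb.trans_lt hba).ne'] using
      hg.apply_smul_le hg0 self_mem_Ici ha (div_nonneg hb ha) hratio.le
  have hshrink : b / a * g b < g b := mul_lt_of_lt_one_left hgb hratio
  linarith [mul_le_mul_of_nonneg_left h (div_nonneg hb ha)]

lemma ConvexOn.integral_le_of_integral_comp_le {α : Type*} [MeasurableSpace α] {μ : Measure α}
    [IsFiniteMeasure μ] [NeZero μ] {g : ℝ → ℝ} (hg : ConvexOn ℝ univ g) (hg0 : g 0 = 0)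
    {f : α → ℝ} (hf0 : ∀ x, 0 ≤ f x) (hf : Integrable f μ) (hgf : Integrable (g ∘ f) μ)
    {b : ℝ} (hb : 0 ≤ b) (hgb : 0 < g b) (h : ∫ x, g (f x) ∂μ ≤ μ.real univ * g b) :
    ∫ x, f x ∂μ ≤ μ.real univ * b := by
  have hjensen : g (⨍ x, f x ∂μ) ≤ g b := by
    refine (hg.map_average_le (hg.continuousOn isOpen_univ) isClosed_univ
      (ae_of_all _ fun _ => trivial) hf hgf).trans ?_
    rwa [average_eq, smul_eq_mul, inv_mul_le_iff₀ measureReal_univ_pos]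
  have havg : ⨍ x, f x ∂μ ≤ b := by
    refine (hg.subset (subset_univ _) (convex_Ici 0)).le_of_apply_le hg0 ?_ hb hgb hjensen
    rw [average_eq]
    exact smul_nonneg (by positivity) (integral_nonneg hf0)
  rw [← measure_smul_average, smul_eq_mul]
  gcongr

section RadialMinorant

variable {Φ : Ed d → ℝ}

lemma radialConvexMinorant_zero (hΦ : ∀ y, 0 ≤ Φ y) : RadialConvexMinorant Φ 0 :=
  ⟨convexOn_const 0 convex_univ, fun _ => le_rfl, fun _ _ _ => rfl, hΦ⟩

lemma RadialConvexMinorant.le_aPhi {Ψ : Ed d → ℝ} (hΨ : RadialConvexMinorant Φ Ψ) (x : Ed d) :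
    Ψ x ≤ APhi Φ x :=
  le_csSup ⟨Φ x, by rintro r ⟨Ψ', hΨ', rfl⟩; exact hΨ'.2.2.2 x⟩ ⟨Ψ, hΨ, rfl⟩

lemma aPhi_le_of_forall_le {x : Ed d} {r : ℝ} (hΦ : ∀ y, 0 ≤ Φ y)
    (h : ∀ Ψ, RadialConvexMinorant Φ Ψ → Ψ x ≤ r) : APhi Φ x ≤ r :=
  csSup_le ⟨0, 0, radialConvexMinorant_zero hΦ, rfl⟩ (by rintro _ ⟨Ψ, hΨ, rfl⟩; exact h Ψ hΨ)

lemma aPhi_nonneg (hΦ : ∀ y, 0 ≤ Φ y) (x : Ed d) : 0 ≤ APhi Φ x :=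
  (radialConvexMinorant_zero hΦ).le_aPhi x

lemma aPhi_le (hΦ : ∀ y, 0 ≤ Φ y) (x : Ed d) : APhi Φ x ≤ Φ x :=
  aPhi_le_of_forall_le hΦ fun _ hΨ => hΨ.2.2.2 x

lemma aPhi_zero (hΦ : ∀ y, 0 ≤ Φ y) (h0 : Φ 0 = 0) : APhi Φ 0 = 0 :=
  le_antisymm (h0 ▸ aPhi_le hΦ 0) (aPhi_nonneg hΦ 0)

lemma convexOn_aPhi (hΦ : ∀ y, 0 ≤ Φ y) : ConvexOn ℝ univ (APhi Φ) := by
  refine ⟨convex_univ, fun x _ y _ a b ha hb hab => aPhi_le_of_forall_le hΦ fun Ψ hΨ => ?_⟩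
  calc Ψ (a • x + b • y) ≤ a * Ψ x + b * Ψ y := hΨ.1.2 trivial trivial ha hb hab
    _ ≤ a * APhi Φ x + b * APhi Φ y := by gcongr <;> exact hΨ.le_aPhi _

lemma aPhi_congr_norm {x y : Ed d} (h : ‖x‖ = ‖y‖) : APhi Φ x = APhi Φ y := by
  unfold APhi
  congr 1
  ext r
  constructor <;> rintro ⟨Ψ, hΨ, rfl⟩
  exacts [⟨Ψ, hΨ, hΨ.2.2.1 x y h⟩, ⟨Ψ, hΨ, hΨ.2.2.1 y x h.symm⟩]

end RadialMinorant

lemma integral_norm_le_of_rhoE_le_one {Φ : Ed d → ℝ} (hΦ : ∀ y, 0 ≤ Φ y) (h0 : Φ 0 = 0)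
    {T l b : ℝ} (hT : 0 < T) (hl : 0 < l) {e : Ed d} (he : ‖e‖ = 1) (hb : 0 ≤ b)
    (hbT : APhi Φ (b • e) = 1 / T) {v : ℝ → Ed d} (hv : IntegrableOn v (Icc 0 T))
    (hρ : rhoE T Φ (fun t => l⁻¹ • v t) ≤ 1) :
    ∫ s in Icc 0 T, ‖v s‖ ≤ l * T * b := by
  set μ := volume.restrict (Icc (0:ℝ) T)
  have hμ : μ.real univ = T := by
    rw [measureReal_restrict_apply_univ, Real.volume_real_Icc_of_le hT.le, sub_zero]
  have : NeZero μ := ⟨fun h => hT.ne' (by rw [← hμ, h, measureReal_zero_apply])⟩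
  set g : ℝ → ℝ := fun r => APhi Φ (r • e)
  have hg : ConvexOn ℝ univ g :=
    (convexOn_aPhi hΦ).comp_linearMap (LinearMap.toSpanSingleton ℝ (Ed d) e)
  have hgv : ∀ s, g (l⁻¹ * ‖v s‖) = APhi Φ (l⁻¹ • v s) := fun s => by
    refine aPhi_congr_norm ?_
    rw [norm_smul, norm_smul, he, mul_one, Real.norm_of_nonneg (by positivity),
      Real.norm_of_nonneg (by positivity)]
  have hlint : ∫⁻ s, ENNReal.ofReal (g (l⁻¹ * ‖v s‖)) ∂μ ≤ 1 :=
    (lintegral_mono fun s => ENNReal.ofReal_le_ofReal (hgv s ▸ aPhi_le hΦ _)).trans hρ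
  have hgv_nonneg : 0 ≤ᵐ[μ] fun s => g (l⁻¹ * ‖v s‖) := ae_of_all _ fun _ => aPhi_nonneg hΦ _
  have hgv_meas : AEStronglyMeasurable (fun s => g (l⁻¹ * ‖v s‖)) μ :=
    (continuousOn_univ.1 (hg.continuousOn isOpen_univ)).comp_aestronglyMeasurable
      (hv.norm.const_mul l⁻¹).aestronglyMeasurable
  have hgv_int : Integrable (g ∘ fun s => l⁻¹ * ‖v s‖) μ :=
    ⟨hgv_meas, (hasFiniteIntegral_iff_ofReal hgv_nonneg).2 (hlint.trans_lt ENNReal.one_lt_top)⟩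
  have hgb : g b = 1 / T := hbT
  have hgv_le : ∫ s, g (l⁻¹ * ‖v s‖) ∂μ ≤ μ.real univ * g b := by
    rw [hμ, hgb, mul_one_div_cancel hT.ne', integral_eq_lintegral_of_nonneg_ae hgv_nonneg hgv_meas]
    exact ENNReal.toReal_le_of_le_ofReal zero_le_one (hlint.trans_eq ENNReal.ofReal_one.symm)
  have key := hg.integral_le_of_integral_comp_le (by simp [g, aPhi_zero hΦ h0])
    (fun s => by positivity) (hv.norm.const_mul l⁻¹) hgv_int hb (by rw [hgb]; positivity) hgv_le
  rw [integral_const_mul, hμ, inv_mul_le_iff₀ hl] at key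
  linarith

section Primitive

variable {E : Type*} [NormedAddCommGroup E] [NormedSpace ℝ E] {u u' : ℝ → E} {T : ℝ}

lemma continuousOn_of_eq_add_integral (hT : 0 ≤ T) (hu' : IntegrableOn u' (Icc 0 T))
    (hu : ∀ t ∈ Icc (0:ℝ) T, u t = u 0 + ∫ s in (0:ℝ)..t, u' s) : ContinuousOn u (Icc 0 T) := by
  rw [← uIcc_of_le hT] at hu' ⊢
  refine (continuousOn_const.add
    (intervalIntegral.continuousOn_primitive_interval hu')).congr fun t ht => hu t ?_
  rwa [← uIcc_of_le hT]

lemma norm_sub_le_integral_norm_of_eq_add_integral (hu' : IntegrableOn u' (Icc 0 T))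
    (hu : ∀ t ∈ Icc (0:ℝ) T, u t = u 0 + ∫ s in (0:ℝ)..t, u' s) {s t : ℝ}
    (hs : s ∈ Icc 0 T) (ht : t ∈ Icc 0 T) : ‖u t - u s‖ ≤ ∫ r in Icc 0 T, ‖u' r‖ := by
  have hii : ∀ x ∈ Icc (0:ℝ) T, IntervalIntegrable u' volume 0 x := fun x hx =>
    (hu'.mono_set (uIcc_subset_Icc ⟨le_rfl, hx.1.trans hx.2⟩ hx)).intervalIntegrable
  rw [hu t ht, hu s hs, add_sub_add_left_eq_sub,
    intervalIntegral.integral_interval_sub_left (hii t ht) (hii s hs)]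
  exact intervalIntegral.norm_integral_le_integral_norm_uIoc.trans <|
    setIntegral_mono_set hu'.norm (ae_of_all _ fun _ => norm_nonneg _)
      (uIoc_subset_uIcc.trans (uIcc_subset_Icc hs ht)).eventuallyLE

lemma mul_norm_le_integral_norm_add_of_eq_add_integral (hu' : IntegrableOn u' (Icc 0 T))
    (hu : ∀ t ∈ Icc (0:ℝ) T, u t = u 0 + ∫ s in (0:ℝ)..t, u' s) {t : ℝ} (ht : t ∈ Icc 0 T) :
    T * ‖u t‖ ≤ (∫ s in Icc 0 T, ‖u s‖) + T * ∫ r in Icc 0 T, ‖u' r‖ := by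
  have hT : 0 ≤ T := ht.1.trans ht.2
  have hu_int : IntegrableOn (fun s => ‖u s‖) (Icc 0 T) :=
    (continuousOn_of_eq_add_integral hT hu' hu).norm.integrableOn_Icc
  have hconst : ∀ c : ℝ, IntegrableOn (fun _ => c) (Icc (0:ℝ) T) := fun c =>
    continuousOn_const.integrableOn_Icc
  have hmono := setIntegral_mono_on (hconst ‖u t‖) (hu_int.add (hconst _)) measurableSet_Icc
    fun s hs => (norm_le_norm_add_norm_sub' (u t) (u s)).trans
      (add_le_add_right (norm_sub_le_integral_norm_of_eq_add_integral hu' hu hs ht) _)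
  rwa [integral_add' hu_int (hconst _), setIntegral_const, setIntegral_const,
    Real.volume_real_Icc_of_le hT, sub_zero, smul_eq_mul, smul_eq_mul] at hmono

end Primitive

section Luxemburg

variable {Φ : Ed d → ℝ} {T : ℝ}

def luxNormSet (T : ℝ) (Φ : Ed d → ℝ) (u : ℝ → Ed d) : Set ℝ :=
  {l : ℝ | 0 < l ∧ rhoE T Φ (fun t => l⁻¹ • u t) ≤ 1}

lemma luxNorm_eq_sInf (u : ℝ → Ed d) : luxNorm T Φ u = sInf (luxNormSet T Φ u) := rfl

lemma bddBelow_luxNormSet (u : ℝ → Ed d) : BddBelow (luxNormSet T Φ u) :=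
  ⟨0, fun _ hl => hl.1.le⟩

lemma luxNorm_nonneg (u : ℝ → Ed d) : 0 ≤ luxNorm T Φ u :=
  Real.sInf_nonneg fun _ hl => hl.1.le

lemma luxNormSet_nonempty (hΦ : ConvexOn ℝ univ Φ) (h0 : Φ 0 = 0) {lam : ℝ}
    (hlam : 0 < lam) {u : ℝ → Ed d} (hfin : rhoE T Φ (fun t => lam • u t) < ⊤) :
    (luxNormSet T Φ u).Nonempty := by
  set M := (rhoE T Φ fun t => lam • u t).toReal
  have hM : 0 ≤ M := ENNReal.toReal_nonneg
  set ε := (M + 1)⁻¹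
  have hε : 0 < ε := by positivity
  refine ⟨(ε * lam)⁻¹, by positivity, ?_⟩
  calc rhoE T Φ (fun t => (ε * lam)⁻¹⁻¹ • u t)
      ≤ ∫⁻ t in Icc 0 T, ENNReal.ofReal ε * ENNReal.ofReal (Φ (lam • u t)) := by
        refine lintegral_mono fun t => ?_
        simp only [inv_inv, mul_smul]
        rw [← ENNReal.ofReal_mul hε.le]
        exact ENNReal.ofReal_le_ofReal <|
          hΦ.apply_smul_le h0 trivial trivial hε.le (inv_le_one_of_one_le₀ (by linarith))
    _ = ENNReal.ofReal ε * ENNReal.ofReal M := by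
        rw [lintegral_const_mul' _ _ ENNReal.ofReal_ne_top, ENNReal.ofReal_toReal hfin.ne]
        rfl
    _ ≤ 1 := by
        rw [← ENNReal.ofReal_mul hε.le, ← ENNReal.ofReal_one]
        exact ENNReal.ofReal_le_ofReal <| by rw [inv_mul_le_iff₀ (by positivity)]; linarith

lemma luxNormSet_nonempty_of_continuousOn (hΦ : ConvexOn ℝ univ Φ) (h0 : Φ 0 = 0)
    {u : ℝ → Ed d} (hu : ContinuousOn u (Icc 0 T)) :
    (luxNormSet T Φ u).Nonempty := by
  have hΦu : ContinuousOn (fun t => Φ ((1:ℝ) • u t)) (Icc 0 T) := by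
    simp only [one_smul]
    exact (continuousOn_univ.1 (hΦ.continuousOn isOpen_univ)).comp_continuousOn hu
  exact luxNormSet_nonempty hΦ h0 one_pos hΦu.integrableOn_Icc.lintegral_lt_top

end Luxemburg

lemma norm_le_of_rhoE_le_one {Φ : Ed d → ℝ} (hΦ : ∀ y, 0 ≤ Φ y) (h0 : Φ 0 = 0) {T b : ℝ}
    (hT : 0 < T) {e : Ed d} (he : ‖e‖ = 1) (hb : 0 ≤ b) (hbT : APhi Φ (b • e) = 1 / T)
    {u u' : ℝ → Ed d} (hu' : IntegrableOn u' (Icc 0 T))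
    (hu : ∀ t ∈ Icc (0:ℝ) T, u t = u 0 + ∫ s in (0:ℝ)..t, u' s) {t : ℝ} (ht : t ∈ Icc 0 T)
    {l l' : ℝ} (hl : 0 < l) (hρ : rhoE T Φ (fun t => l⁻¹ • u t) ≤ 1)
    (hl' : 0 < l') (hρ' : rhoE T Φ (fun t => l'⁻¹ • u' t) ≤ 1) :
    ‖u t‖ ≤ b * max 1 T * (l + l') := by
  have hu_int : ∫ s in Icc 0 T, ‖u s‖ ≤ l * T * b :=
    integral_norm_le_of_rhoE_le_one hΦ h0 hT hl he hb hbT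
      (continuousOn_of_eq_add_integral hT.le hu' hu).integrableOn_Icc hρ
  have hu'_int : ∫ s in Icc 0 T, ‖u' s‖ ≤ l' * T * b :=
    integral_norm_le_of_rhoE_le_one hΦ h0 hT hl' he hb hbT hu' hρ'
  have hmean := mul_norm_le_integral_norm_add_of_eq_add_integral hu' hu ht
  calc ‖u t‖ ≤ b * (l + T * l') := by
        refine le_of_mul_le_mul_left ?_ hT
        calc T * ‖u t‖ ≤ l * T * b + T * (l' * T * b) :=
              hmean.trans (add_le_add hu_int (mul_le_mul_of_nonneg_left hu'_int hT.le))
          _ = T * (b * (l + T * l')) := by ring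
    _ ≤ b * (max 1 T * l + max 1 T * l') := by
        gcongr
        exacts [le_mul_of_one_le_left hl.le (le_max_left 1 T), le_max_right 1 T]
    _ = b * max 1 T * (l + l') := by ring

/-- **Sobolev's inequality.** For `u ∈ W^1L^Φ`:
`sup_{t∈[0,T]} |u(t)| ≤ Ā⁻¹(1/T) ⬝ max{1,T} ⬝ (‖u‖_{L^Φ} + ‖u'‖_{L^Φ})`. -/
theorem statement3 {d : ℕ} (T : ℝ) (hT : 0 < T) (Φ : Ed d → ℝ) (hΦ : IsNInf Φ)
    (Abar AbarInv : ℝ → ℝ)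
    (hAbar : ∀ x : Ed d, Abar ‖x‖ = APhi Φ x)
    (hAbarInv : ∀ r ∈ Ici (0:ℝ), AbarInv r ∈ Ici (0:ℝ) ∧ Abar (AbarInv r) = r)
    (u u' : ℝ → Ed d) (hu : MemW1Lphi T Φ u u') (t : ℝ) (ht : t ∈ Icc (0:ℝ) T) :
    ‖u t‖ ≤ AbarInv (1 / T) * max 1 T * (luxNorm T Φ u + luxNorm T Φ u') := by
  obtain ⟨-, hconv, hpos, h0, -⟩ := hΦ
  obtain ⟨hu'_int, ⟨-, lam, hlam, hfin⟩, hu_eq⟩ := hu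
  obtain ⟨hb0, hbT⟩ := hAbarInv (1 / T) (one_div_pos.2 hT).le
  rcases Nat.eq_zero_or_pos d with rfl | hd
  · rw [Subsingleton.elim (u t) 0, norm_zero]
    exact mul_nonneg (mul_nonneg hb0 (by positivity))
      (add_nonneg (luxNorm_nonneg u) (luxNorm_nonneg u'))
  set b := AbarInv (1 / T)
  set e : Ed d := EuclideanSpace.single ⟨0, hd⟩ 1
  have he : ‖e‖ = 1 := by simp [e]
  have hbe : APhi Φ (b • e) = 1 / T := by
    rw [← hAbar, norm_smul, he, mul_one, Real.norm_of_nonneg hb0, hbT]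
  have hb : 0 < b := hb0.lt_of_ne fun hb => by
    rw [← hb, zero_smul, aPhi_zero hpos h0] at hbe
    exact (one_div_pos.2 hT).ne' hbe.symm
  have hC : 0 < b * max 1 T := by positivity
  have hS := luxNormSet_nonempty_of_continuousOn hconv h0
    (continuousOn_of_eq_add_integral hT.le hu'_int hu_eq)
  have hS' := luxNormSet_nonempty hconv h0 hlam hfin
  rw [← div_le_iff₀' hC, luxNorm_eq_sInf, luxNorm_eq_sInf,
    ← csInf_add hS (bddBelow_luxNormSet u) hS' (bddBelow_luxNormSet u')]
  refine le_csInf (hS.add hS') ?_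
  rintro _ ⟨l, ⟨hl, hρ⟩, l', ⟨hl', hρ'⟩, rfl⟩
  exact (div_le_iff₀' hC).2 <|
    norm_le_of_rhoE_le_one hpos h0 hT he hb0 hbe hu'_int hu_eq ht hl hρ hl' hρ'
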